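/- Suppose x : [0, t*] → ℝⁿ is a solution of the system such that x(t) ∈ [0,∞)ⁿ for all t ∈ [0, t*]. Then for each coordinate k ∈ {1,…,n}, if x_k(0) > 0 then x_k(t*) > 0. -/

import Mathlib

/-!
Along a nonnegative trajectory on a compact time interval all coordinates stay in a box
`[0, R]ⁿ`. There every reaction monomial `∏ₗ θ(xₗ)^{b_{lj}}` containing species `k`
(so `b_{kj} ≥ 1`) is at most a constant times `θ(x_k) ≤ L x_k`, by the Lipschitz bound at
`0`, while the monomials without species `k` only contribute nonnegative terms to `ẋ_k`.
Hence `ẋ_k ≥ -C x_k`, so `e^{Ct} x_k(t)` is nondecreasing and `x_k` cannot reach `0`.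
-/

open Set Finset

lemma pos_of_hasDerivWithinAt_ge_neg_mul {u u' : ℝ → ℝ} {a b C : ℝ} (hab : a ≤ b)
    (hu : ∀ t ∈ Icc a b, HasDerivWithinAt u (u' t) (Icc a b) t)
    (hbound : ∀ t ∈ Icc a b, -(C * u t) ≤ u' t) (ha : 0 < u a) : 0 < u b := by
  have hmono : MonotoneOn (fun t => Real.exp (C * t) * u t) (Icc a b) := by
    refine monotoneOn_of_hasDerivWithinAt_nonneg (convex_Icc a b)
      (f' := fun t => Real.exp (C * t) * C * u t + Real.exp (C * t) * u' t) ?_ ?_ ?_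
    · exact (Real.continuous_exp.comp (continuous_const_mul C)).continuousOn.mul
        fun t ht => (hu t ht).continuousWithinAt
    · intro t ht
      have hexp : HasDerivAt (fun s => Real.exp (C * s)) (Real.exp (C * t) * C) t := by
        simpa using ((hasDerivAt_id t).const_mul C).exp
      exact (hexp.hasDerivWithinAt.mul (hu t (interior_subset ht))).mono interior_subset
    · intro t ht
      have h := hbound t (interior_subset ht)
      have : 0 ≤ Real.exp (C * t) * (C * u t + u' t) :=
        mul_nonneg (Real.exp_pos _).le (by linarith)
      linarith
  have h := hmono (left_mem_Icc.2 hab) (right_mem_Icc.2 hab) hab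
  exact pos_of_mul_pos_right ((mul_pos (Real.exp_pos _) ha).trans_le h) (Real.exp_pos _).le

lemma LocallyLipschitz.exists_le_mul_of_map_zero {θ : ℝ → ℝ} (hθ : LocallyLipschitz θ)
    (h0 : θ 0 = 0) (R : ℝ) : ∃ L : ℝ, 0 ≤ L ∧ ∀ y ∈ Icc 0 R, θ y ≤ L * y := by
  obtain ⟨K, hK⟩ := (hθ.locallyLipschitzOn (s := Icc 0 R)).exists_lipschitzOnWith_of_compact
    isCompact_Icc
  refine ⟨K, K.coe_nonneg, fun y hy => ?_⟩
  have h := hK.dist_le_mul y hy 0 (left_mem_Icc.2 (hy.1.trans hy.2))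
  rw [h0, Real.dist_eq, Real.dist_eq, sub_zero, sub_zero, abs_of_nonneg hy.1] at h
  exact (le_abs_self _).trans h

lemma Real.rpow_le_mul_rpow_sub_one {a Θ b : ℝ} (ha : 0 ≤ a) (haΘ : a ≤ Θ) (hb : 1 ≤ b) :
    a ^ b ≤ a * Θ ^ (b - 1) := by
  calc a ^ b = a ^ (1 + (b - 1)) := by rw [add_sub_cancel]
    _ = a * a ^ (b - 1) := by rw [Real.rpow_add' ha (by linarith), Real.rpow_one]
    _ ≤ a * Θ ^ (b - 1) :=
      mul_le_mul_of_nonneg_left (Real.rpow_le_rpow ha haΘ (by linarith)) ha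

lemma prod_rpow_le_mul {ι : Type*} [Fintype ι] [DecidableEq ι] {u b : ι → ℝ} {Θ : ℝ}
    (k : ι) (hu : ∀ l, 0 ≤ u l) (huΘ : ∀ l, u l ≤ Θ) (hb : ∀ l, 0 ≤ b l) (hbk : 1 ≤ b k) :
    ∏ l, u l ^ b l ≤ u k * (Θ ^ (b k - 1) * ∏ l ∈ univ.erase k, Θ ^ b l) := by
  rw [← mul_prod_erase univ _ (mem_univ k), ← mul_assoc]
  exact mul_le_mul (Real.rpow_le_mul_rpow_sub_one (hu k) (huΘ k) hbk)
    (prod_le_prod (fun l _ => Real.rpow_nonneg (hu l) _)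
      fun l _ => Real.rpow_le_rpow (hu l) (huΘ l) (hb l))
    (prod_nonneg fun l _ => Real.rpow_nonneg (hu l) _)
    (mul_nonneg (hu k) (Real.rpow_nonneg ((hu k).trans (huΘ k)) _))

section MassAction

variable {ι κ : Type*} [Fintype ι] [Fintype κ] [DecidableEq ι] {θ : ℝ → ℝ}

lemma mul_prod_rpow_le_mul_coord (hθnn : ∀ y, 0 ≤ θ y) {L R : ℝ} (hL0 : 0 ≤ L)
    (hL : ∀ y ∈ Icc 0 R, θ y ≤ L * y) {b : ι → ℝ} (hb : ∀ l, 0 ≤ b l)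
    (hbent : ∀ l, b l = 0 ∨ 1 ≤ b l) (k : ι) {x : ι → ℝ} (hx : ∀ l, x l ∈ Icc 0 R) :
    b k * ∏ l, θ (x l) ^ b l ≤
      b k * L * ((L * R) ^ (b k - 1) * ∏ l ∈ univ.erase k, (L * R) ^ b l) * x k := by
  rcases hbent k with hbk | hbk
  · simp [hbk]
  have hθR : ∀ l, θ (x l) ≤ L * R := fun l =>
    (hL _ (hx l)).trans (mul_le_mul_of_nonneg_left (hx l).2 hL0)
  calc b k * ∏ l, θ (x l) ^ b l
      ≤ b k * (θ (x k) * ((L * R) ^ (b k - 1) * ∏ l ∈ univ.erase k, (L * R) ^ b l)) :=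
          mul_le_mul_of_nonneg_left (prod_rpow_le_mul k (fun l => hθnn _) hθR hb hbk) (hb k)
    _ ≤ b k * ((L * x k) * ((L * R) ^ (b k - 1) * ∏ l ∈ univ.erase k, (L * R) ^ b l)) := by
          have hLR : 0 ≤ L * R := (hθnn _).trans (hθR k)
          gcongr
          exact hL _ (hx k)
    _ = _ := by ring

lemma exists_neg_mul_le_massAction_coord (hθlip : LocallyLipschitz θ) (hθ0 : θ 0 = 0)
    (hθnn : ∀ y, 0 ≤ θ y) {A : Matrix κ κ ℝ} (hA : ∀ i j, 0 ≤ A i j) {B : Matrix ι κ ℝ}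
    (hB : ∀ l j, 0 ≤ B l j) (hBent : ∀ l j, B l j = 0 ∨ 1 ≤ B l j) (k : ι) (R : ℝ) :
    ∃ C, ∀ x : ι → ℝ, (∀ l, x l ∈ Icc 0 R) →
      -(C * x k) ≤ ∑ i, ∑ j, A i j * (∏ l, θ (x l) ^ B l j) * (B k i - B k j) := by
  obtain ⟨L, hL0, hL⟩ := hθlip.exists_le_mul_of_map_zero hθ0 R
  set c : κ → ℝ := fun j =>
    B k j * L * ((L * R) ^ (B k j - 1) * ∏ l ∈ univ.erase k, (L * R) ^ B l j)
  refine ⟨∑ i, ∑ j, A i j * c j, fun x hx => ?_⟩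
  simp only [sum_mul, ← sum_neg_distrib]
  refine sum_le_sum fun i _ => sum_le_sum fun j _ => ?_
  have hc : B k j * ∏ l, θ (x l) ^ B l j ≤ c j * x k :=
    mul_prod_rpow_le_mul_coord hθnn hL0 hL (fun l => hB l j) (fun l => hBent l j) k hx
  have hp : 0 ≤ ∏ l, θ (x l) ^ B l j := prod_nonneg fun l _ => Real.rpow_nonneg (hθnn _) _
  -- since `B k i ≥ 0`, the `(i, j)` term is at least `-A i j * B k j * (monomial j)`
  have hAc := mul_le_mul_of_nonneg_left hc (hA i j)
  have hBki := mul_nonneg (mul_nonneg (hA i j) hp) (hB k i)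
  linarith

end MassAction

theorem stmt_13
    (n m : ℕ)
    (θ : ℝ → ℝ)
    (hθlip : LocallyLipschitz θ)
    (hθ0 : θ 0 = 0)
    (hθnn : ∀ y : ℝ, 0 ≤ θ y)
    (A : Matrix (Fin m) (Fin m) ℝ)
    (hAnn : ∀ i j, 0 ≤ A i j)
    (B : Matrix (Fin n) (Fin m) ℝ)
    (hBnn : ∀ k j, 0 ≤ B k j)
    (hBent : ∀ k j, B k j = 0 ∨ 1 ≤ B k j)
    (f : EuclideanSpace ℝ (Fin n) → EuclideanSpace ℝ (Fin n))
    (hf : ∀ x : EuclideanSpace ℝ (Fin n), ∀ k : Fin n,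
      f x k = ∑ i : Fin m, ∑ j : Fin m,
        A i j * (∏ l : Fin n, θ (x l) ^ (B l j)) * (B k i - B k j))
    :
    ∀ tstar : ℝ, 0 ≤ tstar → ∀ x : ℝ → EuclideanSpace ℝ (Fin n),
      (∀ t ∈ Set.Icc (0:ℝ) tstar, HasDerivWithinAt x (f (x t)) (Set.Icc 0 tstar) t) →
      (∀ t ∈ Set.Icc (0:ℝ) tstar, ∀ k, 0 ≤ x t k) →
      ∀ k, 0 < x 0 k → 0 < x tstar k := by
  intro tstar htstar x hx hxnn k hk
  obtain ⟨R, hR⟩ := isCompact_Icc.exists_bound_of_continuousOn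
    fun t ht => (hx t ht).continuousWithinAt
  obtain ⟨C, hC⟩ := exists_neg_mul_le_massAction_coord hθlip hθ0 hθnn hAnn hBnn hBent k R
  refine pos_of_hasDerivWithinAt_ge_neg_mul (u := fun t => x t k) (u' := fun t => f (x t) k)
    (C := C) htstar (fun t ht => ?_) (fun t ht => ?_) hk
  · exact (EuclideanSpace.proj k).hasFDerivAt.comp_hasDerivWithinAt t (hx t ht)
  · rw [hf]
    exact hC _ fun l =>
      ⟨hxnn t ht l, (le_abs_self _).trans ((PiLp.norm_apply_le _ l).trans (hR t ht))⟩
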